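/- Let V = ℝ^d, H a Hilbert space, and U : V → U(H) a strongly continuous unitary representation implementing an action α_x = Ad(U_x) on B(H). For z ∈ V and a ∈ B(H) with α_x(a) = e(−x·z)a for all x (a homogeneous element), and for J skew-symmetric, the operator T on L²(V; H) defined by (Tξ)(x) = ∫_V α_{Jy−x}(a) ξ̂(y) e(x·y) dy (for ξ Schwartz) satisfies (Tξ)(x) = α_{−x}(a) ξ(x + Jz). -/

import Mathlib

/-!
Homogeneity turns `α_{Jy-x}(a)` into the scalar `e(-(Jy-x)·z)` times `a`. By skew-symmetry of `J`
this phase combines with `e(x·y)` into `e(x·z) e(y·(x+Jz))`, so the integral is `e(x·z) a` applied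
to the inverse Fourier transform of `ξ̂` at `x + Jz`, which is `ξ(x + Jz)` by Fourier inversion on
Schwartz space; finally `e(x·z) a = α_{-x}(a)`.
-/

open RealInnerProductSpace MeasureTheory

abbrev Vd (d : ℕ) := EuclideanSpace ℝ (Fin d)

/-- The `H`-valued Fourier transform `ξ̂(y) = ∫ ξ(x) e(−x·y) dx`. -/
noncomputable def vFourier {d : ℕ} {H : Type*} [NormedAddCommGroup H] [NormedSpace ℂ H]
    (ξ : Vd d → H) (y : Vd d) : H :=
  ∫ x : Vd d, Complex.exp (-(2 * Real.pi * Complex.I) * ((⟪x, y⟫ : ℝ) : ℂ)) • ξ x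

open FourierTransform

lemma vFourier_eq_fourier {d : ℕ} {E : Type*} [NormedAddCommGroup E] [NormedSpace ℂ E]
    (ξ : Vd d → E) : vFourier ξ = 𝓕 ξ := by
  ext y
  rw [Real.fourier_eq', vFourier]
  congr 1 with x
  push_cast
  ring_nf

lemma Real.fourierInv_comp_continuousLinearMap {V E F : Type*} [NormedAddCommGroup V]
    [InnerProductSpace ℝ V] [FiniteDimensional ℝ V] [MeasurableSpace V] [BorelSpace V]
    [NormedAddCommGroup E] [NormedSpace ℂ E] [CompleteSpace E]
    [NormedAddCommGroup F] [NormedSpace ℂ F] [CompleteSpace F]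
    (L : E →L[ℂ] F) {f : V → E} (hf : Integrable f) (w : V) :
    𝓕⁻ (fun v ↦ L (f v)) w = L (𝓕⁻ f w) := by
  have hint : Integrable (fun v ↦ 𝐞 ⟪v, w⟫ • f v) := by
    simpa [inner_neg_right] using (Real.fourierIntegral_convergent_iff (-w)).2 hf
  simp only [Real.fourierInv_eq, Circle.smul_def, ← L.map_smul]
  exact L.integral_comp_comm (by simpa only [Circle.smul_def] using hint)

lemma inner_sub_add_of_skew {V : Type*} [NormedAddCommGroup V] [InnerProductSpace ℝ V]
    {J : V →ₗ[ℝ] V} (hJ : ∀ x y : V, ⟪J x, y⟫ = -⟪x, J y⟫) (x y z : V) :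
    ⟪x, y⟫ - ⟪J y - x, z⟫ = ⟪x, z⟫ + ⟪y, x + J z⟫ := by
  rw [inner_sub_left, hJ, inner_add_right, real_inner_comm x y]
  ring

theorem stmt7_general (d : ℕ) {H : Type*} [NormedAddCommGroup H] [InnerProductSpace ℂ H]
    [CompleteSpace H]
    -- the action `α_x = Ad(U_x)` on `B(H)`
    (α : Vd d → (H →L[ℂ] H) → (H →L[ℂ] H))
    (J : Vd d →ₗ[ℝ] Vd d) (hJ : ∀ x y : Vd d, ⟪J x, y⟫ = -⟪x, J y⟫)
    (z : Vd d) (a : H →L[ℂ] H)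
    -- homogeneity: `α_x(a) = e(−x·z) a`
    (ha : ∀ x : Vd d,
      α x a = Complex.exp (-(2 * Real.pi * Complex.I) * ((⟪x, z⟫ : ℝ) : ℂ)) • a) :
    ∀ (ξ : SchwartzMap (Vd d) H) (x : Vd d),
      (∫ y : Vd d,
          Complex.exp (2 * Real.pi * Complex.I * ((⟪x, y⟫ : ℝ) : ℂ)) •
            (α (J y - x) a) (vFourier (⇑ξ) y))
        = (α (-x) a) (ξ (x + J z)) := by
  intro ξ x
  set c := Complex.exp (2 * Real.pi * Complex.I * ((⟪x, z⟫ : ℝ) : ℂ)) with hc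
  have hphase : ∀ y, Complex.exp (2 * Real.pi * Complex.I * ((⟪x, y⟫ : ℝ) : ℂ)) •
      (α (J y - x) a) (𝓕 (⇑ξ) y) =
      c • Complex.exp (↑(2 * Real.pi * ⟪y, x + J z⟫) * Complex.I) • a (𝓕 (⇑ξ) y) := by
    intro y
    rw [ha, smul_apply, smul_smul, smul_smul, ← Complex.exp_add, ← Complex.exp_add]
    have h : ((⟪x, y⟫ : ℝ) : ℂ) - ⟪J y - x, z⟫ = ⟪x, z⟫ + ⟪y, x + J z⟫ := by
      exact_mod_cast inner_sub_add_of_skew hJ x y z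
    congr 2
    push_cast
    linear_combination (2 * Real.pi * Complex.I) * h
  calc _ = c • ∫ y, Complex.exp (↑(2 * Real.pi * ⟪y, x + J z⟫) * Complex.I) •
          a (𝓕 (⇑ξ) y) := by
        simp only [vFourier_eq_fourier, hphase, integral_smul]
    _ = c • a (𝓕⁻ (𝓕 (⇑ξ)) (x + J z)) := by
        rw [← Real.fourierInv_eq', Real.fourierInv_comp_continuousLinearMap a (𝓕 ξ).integrable]
    _ = _ := by
        rw [← SchwartzMap.fourier_coe, ← SchwartzMap.fourierInv_coe, fourierInv_fourier_eq, ha,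
          smul_apply, inner_neg_left, hc]
        congr 2
        push_cast
        ring

theorem stmt7 (d : ℕ) {H : Type*} [NormedAddCommGroup H] [InnerProductSpace ℂ H]
    [CompleteSpace H]
    (U : Vd d → (H →L[ℂ] H))
    (hU0 : U 0 = 1) (hUadd : ∀ x y : Vd d, U (x + y) = (U x).comp (U y))
    (hUuni : ∀ (x : Vd d) (v : H), ‖U x v‖ = ‖v‖)
    (hUcont : ∀ v : H, Continuous fun x => U x v)
    -- the action `α_x = Ad(U_x)` on `B(H)`
    (α : Vd d → (H →L[ℂ] H) → (H →L[ℂ] H))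
    (hα : ∀ (x : Vd d) (b : H →L[ℂ] H), α x b = (U x).comp (b.comp (U (-x))))
    (J : Vd d →ₗ[ℝ] Vd d) (hJ : ∀ x y : Vd d, ⟪J x, y⟫ = -⟪x, J y⟫)
    (z : Vd d) (a : H →L[ℂ] H)
    -- homogeneity: `α_x(a) = e(−x·z) a`
    (ha : ∀ x : Vd d,
      α x a = Complex.exp (-(2 * Real.pi * Complex.I) * ((⟪x, z⟫ : ℝ) : ℂ)) • a) :
    ∀ (ξ : SchwartzMap (Vd d) H) (x : Vd d),
      (∫ y : Vd d,
          Complex.exp (2 * Real.pi * Complex.I * ((⟪x, y⟫ : ℝ) : ℂ)) •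
            (α (J y - x) a) (vFourier (⇑ξ) y))
        = (α (-x) a) (ξ (x + J z)) :=
  stmt7_general d α J hJ z a ha
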